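/- For the linear Gaussian state space model, the prior kernel x_{t−1} ↦ N(φ x_{t−1}, σ²) has Wasserstein Lipschitz constant exactly |φ|, and the filtered kernel has Lipschitz constant |φ|τ²/(σ²+τ²), which is strictly smaller than the prior kernel's Lipschitz constant whenever φ ≠ 0 and σ > 0; hence conditioning on the observation strictly improves the contraction rate. -/

import Mathlib

/-!
Both kernels send a point to a Gaussian of fixed variance whose mean is affine in that point, so
everything reduces to `W_p(N(m, v), N(m', v)) = |m - m'|`. Translating by `m' - m` is a coupling
of cost `|m - m'|`, and no coupling does better, since by Jensen every coupling has cost at least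
the norm of the expected displacement, which is `|m - m'|`.
-/

open MeasureTheory ProbabilityTheory

/-- The `p`-Wasserstein distance, defined as an infimum over couplings. -/
noncomputable def wassersteinP {E : Type*} [NormedAddCommGroup E] [MeasurableSpace E]
    (p : ℝ) (μ ν : Measure E) : ℝ :=
  sInf { c | ∃ π : Measure (E × E), IsProbabilityMeasure π ∧
      π.map Prod.fst = μ ∧ π.map Prod.snd = ν ∧
      c = (∫ z, ‖z.1 - z.2‖ ^ p ∂π) ^ (1 / p) }

lemma integral_norm_le_integral_norm_rpow_rpow_inv {α E : Type*} [MeasurableSpace α]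
    [NormedAddCommGroup E] {μ : Measure α} [IsProbabilityMeasure μ] {p : ℝ} (hp : 1 ≤ p)
    {f : α → E} (hf : MemLp f (ENNReal.ofReal p) μ) :
    ∫ x, ‖f x‖ ∂μ ≤ (∫ x, ‖f x‖ ^ p ∂μ) ^ p⁻¹ := by
  have hp0 : 0 < p := zero_lt_one.trans_le hp
  have hf_one : Integrable f μ := hf.integrable (by simpa using hp)
  have hf_rpow : Integrable (fun x ↦ ‖f x‖ ^ p) μ := by
    simpa [ENNReal.toReal_ofReal hp0.le] using hf.integrable_norm_rpow'
  have jensen : (∫ x, ‖f x‖ ∂μ) ^ p ≤ ∫ x, ‖f x‖ ^ p ∂μ :=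
    (convexOn_rpow hp).map_integral_le (Real.continuous_rpow_const hp0.le).continuousOn
      isClosed_Ici (.of_forall fun x ↦ norm_nonneg (f x)) hf_one.norm hf_rpow
  calc ∫ x, ‖f x‖ ∂μ = ((∫ x, ‖f x‖ ∂μ) ^ p) ^ p⁻¹ :=
        (Real.rpow_rpow_inv (integral_nonneg fun x ↦ norm_nonneg _) hp0.ne').symm
    _ ≤ (∫ x, ‖f x‖ ^ p ∂μ) ^ p⁻¹ :=
        Real.rpow_le_rpow (by positivity) jensen (inv_nonneg.2 hp0.le)

section Wasserstein

variable {E : Type*} [NormedAddCommGroup E] [MeasurableSpace E]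

lemma wassersteinP_le_of_coupling {p : ℝ} {μ ν : Measure E} (π : Measure (E × E))
    [IsProbabilityMeasure π] (hfst : π.map Prod.fst = μ) (hsnd : π.map Prod.snd = ν) :
    wassersteinP p μ ν ≤ (∫ z, ‖z.1 - z.2‖ ^ p ∂π) ^ (1 / p) := by
  refine csInf_le ⟨0, ?_⟩ ⟨π, inferInstance, hfst, hsnd, rfl⟩
  rintro c ⟨π', -, -, -, rfl⟩
  exact Real.rpow_nonneg (integral_nonneg fun z ↦ Real.rpow_nonneg (norm_nonneg _) p) _

lemma wassersteinP_map_add_const_le [BorelSpace E] [SecondCountableTopology E] {p : ℝ}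
    (hp : p ≠ 0) (μ : Measure E) [IsProbabilityMeasure μ] (c : E) :
    wassersteinP p μ (μ.map (· + c)) ≤ ‖c‖ := by
  have hshift : Measurable fun x : E ↦ (x, x + c) := by fun_prop
  have := Measure.isProbabilityMeasure_map (μ := μ) hshift.aemeasurable
  calc wassersteinP p μ (μ.map (· + c))
      ≤ (∫ z, ‖z.1 - z.2‖ ^ p ∂μ.map fun x ↦ (x, x + c)) ^ (1 / p) :=
        wassersteinP_le_of_coupling _
          (by rw [Measure.map_map measurable_fst hshift]; exact Measure.map_id)
          (by rw [Measure.map_map measurable_snd hshift]; rfl)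
    _ = ‖c‖ := by
        rw [integral_map (f := fun z : E × E ↦ ‖z.1 - z.2‖ ^ p) hshift.aemeasurable
          ((measurable_fst.sub measurable_snd).norm.pow_const p).aestronglyMeasurable]
        simp [one_div, Real.rpow_rpow_inv (norm_nonneg c) hp]

lemma norm_integral_sub_integral_le_wassersteinP [NormedSpace ℝ E] {p : ℝ} (hp : 1 ≤ p)
    {μ ν : Measure E} [IsProbabilityMeasure μ] [IsProbabilityMeasure ν]
    (hμ : MemLp id (ENNReal.ofReal p) μ) (hν : MemLp id (ENNReal.ofReal p) ν) :
    ‖∫ x, x ∂μ - ∫ x, x ∂ν‖ ≤ wassersteinP p μ ν := by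
  refine le_csInf ⟨_, μ.prod ν, inferInstance, by simp, by simp, rfl⟩ ?_
  rintro c ⟨π, hπ, rfl, rfl, rfl⟩
  have hfst : MemLp Prod.fst (ENNReal.ofReal p) π :=
    (memLp_map_measure_iff hμ.1 measurable_fst.aemeasurable).1 hμ
  have hsnd : MemLp Prod.snd (ENNReal.ofReal p) π :=
    (memLp_map_measure_iff hν.1 measurable_snd.aemeasurable).1 hν
  have hp1 : (1 : ENNReal) ≤ ENNReal.ofReal p := by simpa using hp
  have hmean : ∫ x, x ∂π.map Prod.fst - ∫ x, x ∂π.map Prod.snd = ∫ z, (z.1 - z.2) ∂π := by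
    rw [integral_map (f := fun x ↦ x) measurable_fst.aemeasurable hμ.1,
      integral_map (f := fun x ↦ x) measurable_snd.aemeasurable hν.1, integral_sub (hfst.integrable hp1) (hsnd.integrable hp1)]
  calc ‖∫ x, x ∂π.map Prod.fst - ∫ x, x ∂π.map Prod.snd‖
      ≤ ∫ z, ‖z.1 - z.2‖ ∂π := hmean ▸ norm_integral_le_integral_norm _
    _ ≤ (∫ z, ‖z.1 - z.2‖ ^ p ∂π) ^ (1 / p) := by
        rw [one_div]; exact integral_norm_le_integral_norm_rpow_rpow_inv hp (hfst.sub hsnd)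

end Wasserstein

lemma wassersteinP_gaussianReal {p : ℝ} (hp : 1 ≤ p) (m m' : ℝ) (v : NNReal) :
    wassersteinP p (gaussianReal m v) (gaussianReal m' v) = |m - m'| := by
  refine le_antisymm ?_ ?_
  · have h := wassersteinP_map_add_const_le (by linarith) (gaussianReal m v) (m' - m)
    rwa [gaussianReal_map_add_const, add_sub_cancel, Real.norm_eq_abs, abs_sub_comm] at h
  · have h := norm_integral_sub_integral_le_wassersteinP hp
      (memLp_id_gaussianReal' (μ := m) (v := v) _ ENNReal.ofReal_ne_top)
      (memLp_id_gaussianReal' (μ := m') (v := v) _ ENNReal.ofReal_ne_top)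
    rwa [integral_id_gaussianReal, integral_id_gaussianReal, Real.norm_eq_abs] at h

theorem lgssm_filtered_improves_prior_contraction_general (σ τ : NNReal) (hσ : 0 < σ)
    (φ y : ℝ) (p : ℝ) (hp : 1 ≤ p) :
    (∀ x x' : ℝ, wassersteinP p (gaussianReal (φ * x) (σ ^ 2))
        (gaussianReal (φ * x') (σ ^ 2)) = |φ| * |x - x'|) ∧
    (∀ x x' : ℝ, wassersteinP p
        (gaussianReal (((σ : ℝ) ^ 2 * y + φ * (τ : ℝ) ^ 2 * x) / ((σ : ℝ) ^ 2 + (τ : ℝ) ^ 2))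
          (σ ^ 2 * τ ^ 2 / (σ ^ 2 + τ ^ 2)))
        (gaussianReal (((σ : ℝ) ^ 2 * y + φ * (τ : ℝ) ^ 2 * x') / ((σ : ℝ) ^ 2 + (τ : ℝ) ^ 2))
          (σ ^ 2 * τ ^ 2 / (σ ^ 2 + τ ^ 2)))
        = |φ| * (τ : ℝ) ^ 2 / ((σ : ℝ) ^ 2 + (τ : ℝ) ^ 2) * |x - x'|) ∧
    (φ ≠ 0 → |φ| * (τ : ℝ) ^ 2 / ((σ : ℝ) ^ 2 + (τ : ℝ) ^ 2) < |φ|) := by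
  have hσ2 : 0 < (σ : ℝ) ^ 2 := by positivity
  have hsum : 0 < (σ : ℝ) ^ 2 + (τ : ℝ) ^ 2 := by positivity
  refine ⟨fun x x' ↦ ?_, fun x x' ↦ ?_, fun hφ ↦ ?_⟩
  · rw [wassersteinP_gaussianReal hp, ← mul_sub, abs_mul]
  · rw [wassersteinP_gaussianReal hp, ← sub_div, abs_div, abs_of_pos hsum,
      show (σ : ℝ) ^ 2 * y + φ * τ ^ 2 * x - ((σ : ℝ) ^ 2 * y + φ * τ ^ 2 * x')
        = φ * τ ^ 2 * (x - x') by ring, abs_mul, abs_mul, abs_sq]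
    ring
  · rw [mul_div_assoc]
    exact mul_lt_of_lt_one_right (abs_pos.2 hφ) ((div_lt_one hsum).2 (lt_add_of_pos_left _ hσ2))

/-- For the 1-D linear Gaussian state space model, the prior kernel `x ↦ N(φx, σ²)` has
Wasserstein Lipschitz constant exactly `|φ|`, the filtered kernel
`x ↦ N((σ²y + φτ²x)/(σ²+τ²), σ²τ²/(σ²+τ²))` has Lipschitz constant `|φ|τ²/(σ²+τ²)`, and the
latter is strictly smaller whenever `φ ≠ 0` and `σ > 0`: conditioning on the observation
strictly improves the contraction rate. -/
theorem lgssm_filtered_improves_prior_contraction (σ τ : NNReal) (hσ : 0 < σ) (hτ : 0 < τ)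
    (φ y : ℝ) (p : ℝ) (hp : 1 ≤ p) :
    (∀ x x' : ℝ, wassersteinP p (gaussianReal (φ * x) (σ ^ 2))
        (gaussianReal (φ * x') (σ ^ 2)) = |φ| * |x - x'|) ∧
    (∀ x x' : ℝ, wassersteinP p
        (gaussianReal (((σ : ℝ) ^ 2 * y + φ * (τ : ℝ) ^ 2 * x) / ((σ : ℝ) ^ 2 + (τ : ℝ) ^ 2))
          (σ ^ 2 * τ ^ 2 / (σ ^ 2 + τ ^ 2)))
        (gaussianReal (((σ : ℝ) ^ 2 * y + φ * (τ : ℝ) ^ 2 * x') / ((σ : ℝ) ^ 2 + (τ : ℝ) ^ 2))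
          (σ ^ 2 * τ ^ 2 / (σ ^ 2 + τ ^ 2)))
        = |φ| * (τ : ℝ) ^ 2 / ((σ : ℝ) ^ 2 + (τ : ℝ) ^ 2) * |x - x'|) ∧
    (φ ≠ 0 → |φ| * (τ : ℝ) ^ 2 / ((σ : ℝ) ^ 2 + (τ : ℝ) ^ 2) < |φ|) :=
  lgssm_filtered_improves_prior_contraction_general σ τ hσ φ y p hp
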